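/- arXiv:1610.00098 — 4 statements merged into one kernel-verified Lean document; each statement's English description precedes it below -/
import Mathlib

section
/- Let n ≥ 1 be an integer, b > 0, q ∈ [0, π] and ξ = cos q. Then for every complex number s and every complex number r with r² = s² + b², one has (s+r)^n + (−1)^n (r−s)^n − 2ξ(−i)^n b^n = 2^n · Π_{l=0}^{n−1} ( s + i b cos((q + 2πl)/n) ). -/
/-!
With `x = s + r` and `y = s - r` one has `x * y = (I * b) ^ 2`, and each factor
`x + y + 2 I b cos θ` equals `x⁻¹ (x + I b e^{iθ}) (x + I b e^{-iθ})`. As `θ` runs through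
`(q + 2πl)/n`, the numbers `e^{iθ}` are the `n`-th roots of `e^{iq}`, so the two products over `l`
collapse to `x ^ n - (-I b) ^ n e^{±iq}`, and their product is
`x ^ n (x ^ n + y ^ n - 2 cos q (-I b) ^ n)`.
-/

open Complex Finset

theorem IsPrimitiveRoot.prod_range_add_mul_pow {R : Type*} [CommRing R] [IsDomain R] {n : ℕ}
    {ζ : R} (hζ : IsPrimitiveRoot ζ n) (hn : 0 < n) (w d : R) :
    ∏ l ∈ range n, (w + d * ζ ^ l) = w ^ n - (-d) ^ n := by
  have h := congrArg (Polynomial.eval w) (X_pow_sub_C_eq_prod hζ hn (rfl : (-d) ^ n = _))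
  simp only [Polynomial.eval_sub, Polynomial.eval_pow, Polynomial.eval_X, Polynomial.eval_C,
    Polynomial.eval_prod] at h
  rw [h]
  exact prod_congr rfl fun l _ => by ring

namespace Complex

variable {n : ℕ}

theorem exp_div_mul_I_eq_mul_pow (hn : n ≠ 0) (q : ℂ) (l : ℕ) :
    exp ((q + 2 * Real.pi * l) / n * I) = exp (q / n * I) * exp (2 * Real.pi * I / n) ^ l := by
  have hn' : (n : ℂ) ≠ 0 := Nat.cast_ne_zero.mpr hn
  rw [← exp_nat_mul, ← exp_add]
  congr 1
  field_simp

theorem prod_range_add_mul_exp (hn : n ≠ 0) (w c q : ℂ) :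
    ∏ l ∈ range n, (w + c * exp ((q + 2 * Real.pi * l) / n * I)) =
      w ^ n - (-c) ^ n * exp (q * I) := by
  have hn' : (n : ℂ) ≠ 0 := Nat.cast_ne_zero.mpr hn
  simp_rw [exp_div_mul_I_eq_mul_pow hn, ← mul_assoc]
  rw [(isPrimitiveRoot_exp n hn).prod_range_add_mul_pow (Nat.pos_of_ne_zero hn), ← neg_mul,
    mul_pow, ← exp_nat_mul]
  congr 3
  field_simp

theorem prod_range_add_mul_exp_neg (hn : n ≠ 0) (w c q : ℂ) :
    ∏ l ∈ range n, (w + c * exp (-((q + 2 * Real.pi * l) / n * I))) =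
      w ^ n - (-c) ^ n * exp (-(q * I)) := by
  have hn' : (n : ℂ) ≠ 0 := Nat.cast_ne_zero.mpr hn
  simp_rw [exp_neg, exp_div_mul_I_eq_mul_pow hn, mul_inv, ← inv_pow, ← mul_assoc]
  rw [(isPrimitiveRoot_exp n hn).inv.prod_range_add_mul_pow (Nat.pos_of_ne_zero hn), ← neg_mul,
    mul_pow, inv_pow, ← exp_nat_mul]
  congr 4
  field_simp

theorem add_mul_exp_mul_add_mul_exp_neg (w c θ : ℂ) :
    (w + c * exp (θ * I)) * (w + c * exp (-(θ * I))) = w ^ 2 + 2 * c * w * cos θ + c ^ 2 := by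
  have h : exp (θ * I) * exp (-(θ * I)) = 1 := by rw [← exp_add, add_neg_cancel, exp_zero]
  rw [cos, neg_mul]
  linear_combination c ^ 2 * h

theorem prod_range_add_add_mul_cos (hn : n ≠ 0) {x y c : ℂ} (hxy : x * y = c ^ 2) (q : ℂ) :
    ∏ l ∈ range n, (x + y + 2 * c * cos ((q + 2 * Real.pi * l) / n)) =
      x ^ n + y ^ n - 2 * cos q * (-c) ^ n := by
  by_cases hx : x = 0
  · have hc : c = 0 := pow_eq_zero_iff two_ne_zero |>.mp (by rw [← hxy, hx, zero_mul])
    simp [hx, hc, zero_pow hn]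
  refine mul_left_cancel₀ (pow_ne_zero n hx) ?_
  have hq : exp (q * I) * exp (-(q * I)) = 1 := by rw [← exp_add, add_neg_cancel, exp_zero]
  have hxyn : x ^ n * y ^ n = ((-c) ^ n) ^ 2 := by
    rw [← mul_pow, hxy, ← neg_sq c, ← pow_mul, ← pow_mul, mul_comm]
  calc x ^ n * ∏ l ∈ range n, (x + y + 2 * c * cos ((q + 2 * Real.pi * l) / n))
      = ∏ l ∈ range n, ((x + c * exp ((q + 2 * Real.pi * l) / n * I)) *
          (x + c * exp (-((q + 2 * Real.pi * l) / n * I)))) := by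
        rw [← card_range n, ← prod_const, card_range, ← prod_mul_distrib]
        refine prod_congr rfl fun l _ => ?_
        rw [add_mul_exp_mul_add_mul_exp_neg]
        linear_combination hxy
    _ = (x ^ n - (-c) ^ n * exp (q * I)) * (x ^ n - (-c) ^ n * exp (-(q * I))) := by
        rw [prod_mul_distrib, prod_range_add_mul_exp hn, prod_range_add_mul_exp_neg hn]
    _ = x ^ n * (x ^ n + y ^ n - 2 * cos q * (-c) ^ n) := by
        rw [cos, neg_mul]
        linear_combination ((-c) ^ n) ^ 2 * hq - hxyn

end Complex

theorem Pn_factorization_general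
    (n : ℕ) (hn : 1 ≤ n) (b : ℝ) (q : ℝ)
    (ξ : ℝ) (hξ : ξ = Real.cos q) (s r : ℂ) (hr : r ^ 2 = s ^ 2 + (b : ℂ) ^ 2) :
    (s + r) ^ n + (-1 : ℂ) ^ n * (r - s) ^ n - 2 * (ξ : ℂ) * (-Complex.I) ^ n * (b : ℂ) ^ n
      = 2 ^ n * ∏ l ∈ Finset.range n,
          (s + Complex.I * (b : ℂ) * (Real.cos ((q + 2 * Real.pi * l) / n) : ℝ)) := by
  have hxy : (s + r) * (s - r) = (I * b) ^ 2 := by linear_combination -hr - (b : ℂ) ^ 2 * I_sq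
  calc (s + r) ^ n + (-1 : ℂ) ^ n * (r - s) ^ n - 2 * (ξ : ℂ) * (-I) ^ n * (b : ℂ) ^ n
      = (s + r) ^ n + (s - r) ^ n - 2 * cos q * (-(I * b)) ^ n := by
        rw [← mul_pow, neg_one_mul, neg_sub, mul_assoc _ ((-I) ^ n), ← mul_pow, ← neg_mul, hξ,
          ofReal_cos]
    _ = ∏ l ∈ range n, (s + r + (s - r) + 2 * (I * b) * cos ((q + 2 * Real.pi * l) / n)) :=
        (prod_range_add_add_mul_cos (by omega) hxy q).symm
    _ = 2 ^ n * ∏ l ∈ range n, (s + I * b * (Real.cos ((q + 2 * Real.pi * l) / n) : ℝ)) := by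
        rw [← card_range n, ← prod_const, card_range, ← prod_mul_distrib]
        push_cast
        exact prod_congr rfl fun l _ => by ring

/-- **Factorization of `P_n(s)`** (Lemma 3.4, first part). For `n ≥ 1`, `b > 0`,
`q ∈ [0,π]`, `ξ = cos q`, and any complex `s, r` with `r² = s² + b²`:
`(s+r)^n + (−1)^n (r−s)^n − 2ξ(−i)^n b^n = 2^n ∏_{l=0}^{n−1} (s + i b cos((q+2πl)/n))`. -/
theorem Pn_factorization
    (n : ℕ) (hn : 1 ≤ n) (b : ℝ) (hb : 0 < b) (q : ℝ) (hq : q ∈ Set.Icc 0 Real.pi)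
    (ξ : ℝ) (hξ : ξ = Real.cos q) (s r : ℂ) (hr : r ^ 2 = s ^ 2 + (b : ℂ) ^ 2) :
    (s + r) ^ n + (-1 : ℂ) ^ n * (r - s) ^ n - 2 * (ξ : ℂ) * (-Complex.I) ^ n * (b : ℂ) ^ n
      = 2 ^ n * ∏ l ∈ Finset.range n,
          (s + Complex.I * (b : ℂ) * (Real.cos ((q + 2 * Real.pi * l) / n) : ℝ)) :=
  Pn_factorization_general n hn b q ξ hξ s r hr
end

section
/- Let n ≥ 1 be an odd integer and b > 0. Then for every complex number s and every complex number r with r² = s² + b² and r ≠ 0, one has ((s+r)^n + (r−s)^n)/r = 2^n · Π_{l=1}^{n−1} ( s − i b cos(lπ/n) ). -/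
/-! For odd `n` and `ζ = exp (2πi/n)` one has `A ^ n + B ^ n = ∏ₖ (A + ζ ^ k * B)`. Take
`A = s + r`, `B = r - s`: the factor `k = 0` is `2r`, and the factors `k` and `n - k` pair up.
Since `A - B = 2s`, `AB = r² - s² = b²` and `ζ ^ k + ζ ^ (n - k) = 2 cos (2kπ/n)`, their product
is `4 (s² + b² cos² (kπ/n))`, in which `r` no longer occurs; as `cos ((n - k)π/n) = -cos (kπ/n)`,
this is `4` times the product of the factors `l = k` and `l = n - k` on the right. -/

open Complex Finset
open scoped Real

theorem IsPrimitiveRoot.pow_add_pow_eq_prod_range {R : Type*} [CommRing R] [IsDomain R] {ζ : R}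
    {n : ℕ} (hodd : Odd n) (hζ : IsPrimitiveRoot ζ n) (x y : R) :
    x ^ n + y ^ n = ∏ k ∈ range n, (x + ζ ^ k * y) := by
  classical
  have : NeZero n := ⟨hodd.pos.ne'⟩
  have himage : Polynomial.nthRootsFinset n (1 : R) = (range n).image (ζ ^ ·) := by
    ext z
    simp only [Polynomial.mem_nthRootsFinset hodd.pos, mem_image, mem_range]
    constructor
    · exact hζ.eq_pow_of_pow_eq_one
    · rintro ⟨k, -, rfl⟩
      rw [pow_right_comm, hζ.pow_eq_one, one_pow]
  rw [hζ.pow_add_pow_eq_prod_add_mul x y hodd, himage,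
    prod_image fun i hi j hj => hζ.pow_inj (mem_range.1 hi) (mem_range.1 hj)]

theorem Finset.prod_Icc_two_mul_eq_prod_mul_reflect {M : Type*} [CommMonoid M] (m : ℕ)
    (f : ℕ → M) : ∏ l ∈ Icc 1 (2 * m), f l = ∏ l ∈ Icc 1 m, f l * f (2 * m + 1 - l) := by
  have hsplit : Icc 1 (2 * m) = Icc 1 m ∪ Icc (m + 1) (2 * m) := by
    ext a; simp only [mem_Icc, mem_union]; omega
  have hdisj : Disjoint (Icc 1 m) (Icc (m + 1) (2 * m)) := by
    simp only [disjoint_left, mem_Icc]; omega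
  rw [hsplit, prod_union hdisj, prod_mul_distrib]
  congr 1
  refine prod_nbij' (2 * m + 1 - ·) (2 * m + 1 - ·) ?_ ?_ ?_ ?_ ?_ <;>
    intro a ha <;> simp only [mem_Icc] at * <;> try omega
  congr 1; omega

section RootOfUnity

variable {n l : ℕ}

theorem exp_two_pi_I_div_pow_mul_pow_sub (hn : n ≠ 0) (hl : l ≤ n) :
    cexp (2 * π * I / n) ^ l * cexp (2 * π * I / n) ^ (n - l) = 1 := by
  rw [← pow_add, Nat.add_sub_cancel' hl, (isPrimitiveRoot_exp n hn).pow_eq_one]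

theorem exp_two_pi_I_div_pow_add_pow_sub (hn : n ≠ 0) (hl : l ≤ n) :
    cexp (2 * π * I / n) ^ l + cexp (2 * π * I / n) ^ (n - l)
      = 2 * (2 * (Real.cos (l * π / n) : ℂ) ^ 2 - 1) := by
  set θ : ℂ := l * π / n with hθ
  have hpow : cexp (2 * π * I / n) ^ l = cexp (2 * θ * I) := by
    rw [← exp_nat_mul, hθ]; ring_nf
  have hinv : cexp (2 * π * I / n) ^ (n - l) = cexp (-(2 * θ) * I) := by
    rw [neg_mul, exp_neg, ← hpow]
    exact eq_inv_of_mul_eq_one_right (exp_two_pi_I_div_pow_mul_pow_sub hn hl)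
  rw [hpow, hinv, ← two_cos, cos_two_mul]
  push_cast
  rfl

theorem Real.cos_sub_mul_pi_div (hn : n ≠ 0) (hl : l ≤ n) :
    Real.cos ((n - l : ℕ) * π / n) = -Real.cos (l * π / n) := by
  rw [← Real.cos_pi_sub, Nat.cast_sub hl]
  congr 1
  field_simp

theorem add_exp_pow_mul_mul_add_exp_pow_sub_mul (hn : n ≠ 0) (hl : l ≤ n) (b : ℝ)
    {s r : ℂ} (hr : r ^ 2 = s ^ 2 + (b : ℂ) ^ 2) :
    (s + r + cexp (2 * π * I / n) ^ l * (r - s))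
        * (s + r + cexp (2 * π * I / n) ^ (n - l) * (r - s))
      = 2 ^ 2 * ((s - I * b * (Real.cos (l * π / n) : ℝ))
          * (s - I * b * (Real.cos ((n - l : ℕ) * π / n) : ℝ))) := by
  rw [Real.cos_sub_mul_pi_div hn hl, ofReal_neg]
  linear_combination (s + r) * (r - s) * exp_two_pi_I_div_pow_add_pow_sub hn hl
    + (r - s) ^ 2 * exp_two_pi_I_div_pow_mul_pow_sub hn hl
    + 4 * (Real.cos (l * π / n) : ℂ) ^ 2 * hr
    + 4 * b ^ 2 * (Real.cos (l * π / n) : ℂ) ^ 2 * I_sq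

end RootOfUnity

theorem Qn_factorization_odd_general
    (n : ℕ) (hodd : Odd n) (b : ℝ)
    (s r : ℂ) (hr : r ^ 2 = s ^ 2 + (b : ℂ) ^ 2) (hr0 : r ≠ 0) :
    ((s + r) ^ n + (r - s) ^ n) / r
      = 2 ^ n * ∏ l ∈ Finset.Icc 1 (n - 1),
          (s - Complex.I * (b : ℂ) * (Real.cos (l * Real.pi / n) : ℝ)) := by
  obtain ⟨m, rfl⟩ := hodd
  have hn : 2 * m + 1 ≠ 0 := by omega
  have hpairs : ∏ l ∈ Icc 1 (2 * m), (s + r + cexp (2 * π * I / ↑(2 * m + 1)) ^ l * (r - s))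
      = 2 ^ (2 * m) *
          ∏ l ∈ Icc 1 (2 * m), (s - I * b * (Real.cos (l * π / ↑(2 * m + 1)) : ℝ)) := by
    rw [pow_mul, prod_Icc_two_mul_eq_prod_mul_reflect, prod_Icc_two_mul_eq_prod_mul_reflect,
      prod_congr rfl fun l hl => add_exp_pow_mul_mul_add_exp_pow_sub_mul hn
        (by rw [mem_Icc] at hl; omega) b hr,
      prod_mul_distrib, prod_const, Nat.card_Icc, Nat.add_sub_cancel]
  rw [Nat.add_sub_cancel, div_eq_iff hr0,
    (isPrimitiveRoot_exp _ hn).pow_add_pow_eq_prod_range ⟨m, rfl⟩, ← Nat.Ico_zero_eq_range,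
    prod_eq_prod_Ico_succ_bot (by omega), zero_add, Ico_add_one_right_eq_Icc, hpairs]
  ring

/-- **Factorization of `Q_{n−1}(s)` for odd `n`** (Lemma 3.4, second part). For odd
`n ≥ 1`, `b > 0`, and any complex `s, r` with `r² = s² + b²` and `r ≠ 0`:
`((s+r)^n + (r−s)^n)/r = 2^n ∏_{l=1}^{n−1} (s − i b cos(lπ/n))`. -/
theorem Qn_factorization_odd
    (n : ℕ) (hn : 1 ≤ n) (hodd : Odd n) (b : ℝ) (hb : 0 < b)
    (s r : ℂ) (hr : r ^ 2 = s ^ 2 + (b : ℂ) ^ 2) (hr0 : r ≠ 0) :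
    ((s + r) ^ n + (r - s) ^ n) / r
      = 2 ^ n * ∏ l ∈ Finset.Icc 1 (n - 1),
          (s - Complex.I * (b : ℂ) * (Real.cos (l * Real.pi / n) : ℝ)) :=
  Qn_factorization_odd_general n hodd b s r hr hr0
end

section
/- Let k > 0 be real, n ≥ 1 an integer, and a_1, …, a_n real numbers. Define f_{1,k}(t) := t^{k−1} e^{−i a_1 t} / Γ(k) for t > 0, and for 2 ≤ j ≤ n define recursively f_{j,k}(t) := ∫_0^t f_{j−1,k}(τ) · (t−τ)^{k−1} e^{−i a_j (t−τ)} / Γ(k) dτ. Then for every t > 0, |f_{n,k}(t)| ≤ t^{nk−1} / Γ(nk). -/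
/-! Induction on `n`: since `|e^{-i a s}| = 1`, the bound for `f_{n,k}` turns the integrand of
`f_{n+1,k}(t)` into `τ^{nk-1} (t-τ)^{k-1} / (Γ(nk) Γ(k))`, whose integral over `[0, t]` is the Beta
integral `t^{(n+1)k-1} B(nk, k) = t^{(n+1)k-1} Γ(nk) Γ(k) / Γ((n+1)k)`. -/

open scoped BigOperators
open MeasureTheory

/-- The `n`-fold Laplace convolution `f_{n,k}` of the functions
`t ↦ t^{k−1} e^{−i a_j t}/Γ(k)`, `j = 1, …, n`. -/
noncomputable def laplaceConvPow (k : ℝ) (a : ℕ → ℝ) : ℕ → ℝ → ℂ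
  | 0, _ => 0
  | 1, t => ((t ^ (k - 1) : ℝ) : ℂ) * Complex.exp (-Complex.I * (a 1 : ℂ) * (t : ℂ)) /
      ((Real.Gamma k : ℝ) : ℂ)
  | (j + 2), t => ∫ τ in (0 : ℝ)..t, laplaceConvPow k a (j + 1) τ *
      ((((t - τ) ^ (k - 1) : ℝ) : ℂ) *
        Complex.exp (-Complex.I * (a (j + 2) : ℂ) * ((t : ℂ) - (τ : ℂ))) /
        ((Real.Gamma k : ℝ) : ℂ))

open ProbabilityTheory (beta beta_pos beta_eq_betaIntegralReal)

theorem integral_rpow_mul_sub_rpow {p q t : ℝ} (hp : 0 < p) (hq : 0 < q) (ht : 0 < t) :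
    ∫ τ in (0 : ℝ)..t, τ ^ (p - 1) * (t - τ) ^ (q - 1) = t ^ (p + q - 1) * beta p q := by
  have hcast : ∀ τ ∈ Set.uIcc 0 t, ((τ ^ (p - 1) * (t - τ) ^ (q - 1) : ℝ) : ℂ) =
      (τ : ℂ) ^ ((p : ℂ) - 1) * ((t : ℂ) - τ) ^ ((q : ℂ) - 1) := by
    intro τ hτ
    rw [Set.uIcc_of_le ht.le] at hτ
    push_cast [Complex.ofReal_cpow hτ.1, Complex.ofReal_cpow (sub_nonneg.2 hτ.2)]
    rfl
  rw [← Complex.ofReal_re (∫ τ in (0 : ℝ)..t, _), ← intervalIntegral.integral_ofReal,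
    intervalIntegral.integral_congr hcast, Complex.betaIntegral_scaled _ _ ht,
    beta_eq_betaIntegralReal p q hp hq,
    show (p : ℂ) + q - 1 = ((p + q - 1 : ℝ) : ℂ) by push_cast; rfl,
    ← Complex.ofReal_cpow ht.le, Complex.re_ofReal_mul]

theorem intervalIntegrable_rpow_mul_sub_rpow {p q t : ℝ} (hp : 0 < p) (hq : 0 < q) (ht : 0 < t) :
    IntervalIntegrable (fun τ => τ ^ (p - 1) * (t - τ) ^ (q - 1)) volume 0 t := by
  -- a function that is not integrable has interval integral `0`
  refine intervalIntegral.intervalIntegrable_of_integral_ne_zero ?_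
  rw [integral_rpow_mul_sub_rpow hp hq ht]
  exact (mul_pos (Real.rpow_pos_of_pos ht _) (beta_pos hp hq)).ne'

theorem norm_integral_mul_le_rpow_div_Gamma {p q t : ℝ} (hp : 0 < p) (hq : 0 < q) (ht : 0 < t)
    {f g : ℝ → ℂ} (hf : ∀ τ ∈ Set.Ioc 0 t, ‖f τ‖ ≤ τ ^ (p - 1) / Real.Gamma p)
    (hg : ∀ τ ∈ Set.Ioc 0 t, ‖g τ‖ ≤ (t - τ) ^ (q - 1) / Real.Gamma q) :
    ‖∫ τ in (0 : ℝ)..t, f τ * g τ‖ ≤ t ^ (p + q - 1) / Real.Gamma (p + q) := by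
  calc ‖∫ τ in (0 : ℝ)..t, f τ * g τ‖
      ≤ ∫ τ in (0 : ℝ)..t, τ ^ (p - 1) * (t - τ) ^ (q - 1) / (Real.Gamma p * Real.Gamma q) := by
        refine intervalIntegral.norm_integral_le_of_norm_le ht.le
          (.of_forall fun τ hτ => ?_)
          ((intervalIntegrable_rpow_mul_sub_rpow hp hq ht).div_const _)
        rw [norm_mul, mul_div_mul_comm]
        exact mul_le_mul (hf τ hτ) (hg τ hτ) (norm_nonneg _)
          (div_nonneg (Real.rpow_nonneg hτ.1.le _) (Real.Gamma_pos_of_pos hp).le)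
    _ = t ^ (p + q - 1) / Real.Gamma (p + q) := by
        have := Real.Gamma_pos_of_pos hp
        have := Real.Gamma_pos_of_pos hq
        rw [intervalIntegral.integral_div, integral_rpow_mul_sub_rpow hp hq ht, beta]
        field_simp

theorem norm_rpow_mul_exp_neg_I_mul_div_Gamma {k x : ℝ} (hk : 0 < k) (hx : 0 ≤ x) (b y : ℝ) :
    ‖((x ^ (k - 1) : ℝ) : ℂ) * Complex.exp (-Complex.I * b * y) / ((Real.Gamma k : ℝ) : ℂ)‖ =
      x ^ (k - 1) / Real.Gamma k := by
  rw [norm_div, norm_mul, Complex.norm_exp, Complex.norm_real, Complex.norm_real,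
    Real.norm_of_nonneg (Real.rpow_nonneg hx _),
    Real.norm_of_nonneg (Real.Gamma_pos_of_pos hk).le]
  simp

theorem norm_laplaceConvPow_succ_le {k : ℝ} (hk : 0 < k) (a : ℕ → ℝ) (m : ℕ) {t : ℝ}
    (ht : 0 < t) :
    ‖laplaceConvPow k a (m + 1) t‖ ≤ t ^ ((m + 1 : ℝ) * k - 1) / Real.Gamma ((m + 1 : ℝ) * k) := by
  induction m generalizing t with
  | zero =>
    rw [laplaceConvPow, norm_rpow_mul_exp_neg_I_mul_div_Gamma hk ht.le]
    simp
  | succ m ih =>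
    rw [laplaceConvPow, Nat.cast_succ, add_one_mul _ k]
    refine norm_integral_mul_le_rpow_div_Gamma (by positivity) hk ht (fun τ hτ => ih hτ.1)
      fun τ hτ => ?_
    rw [← Complex.ofReal_sub]
    exact (norm_rpow_mul_exp_neg_I_mul_div_Gamma hk (sub_nonneg.2 hτ.2) _ _).le

/-- **Bound for the iterated Laplace convolution** (Lemma 3.10): for `k > 0`, real
`a_1, …, a_n`, and every `t > 0`, `|f_{n,k}(t)| ≤ t^{nk−1}/Γ(nk)`. -/
theorem laplaceConvPow_bound
    (k : ℝ) (hk : 0 < k) (n : ℕ) (hn : 1 ≤ n) (a : ℕ → ℝ) :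
    ∀ t : ℝ, 0 < t →
      ‖laplaceConvPow k a n t‖ ≤ t ^ ((n : ℝ) * k - 1) / Real.Gamma ((n : ℝ) * k) := by
  obtain ⟨m, rfl⟩ := Nat.exists_eq_add_of_le' hn
  intro t ht
  exact_mod_cast norm_laplaceConvPow_succ_le hk a m ht
end

section
/- Let k ≥ 1 be an integer, b > 0, and let ω, η be complex numbers with |ω| = |η| = 1. For u, v ∈ [−1, 1] set X(u,v) := Im(ω^k) Im(η^k) u + Re(ω^k) Re(η^k) v; then |X(u,v)| ≤ 1 and X(1,1) = Re(ω^k · conj(η)^k). Let q(u,v) := arccos(X(u,v)) and A(s, q) := Π_{l=0}^{k−1} ( s + i b cos((q + 2πl)/k) ). Then: (i) for all complex s and all complex r with r² = s² + b² and R := s + r ≠ 0, one has R^k − 2(−ib)^k X(u,v) + (−ib)^{2k}/R^k = 2^k A(s, q(u,v)); and (ii) for all complex s, A(s, q(1,1)) = A(s, q(u,v)) + 2^{1−k} (−ib)^k [ Im(ω^k) Im(η^k)(u−1) + Re(ω^k) Re(η^k)(v−1) ]. -/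
/-!
Pair the factors of `A` as `z² - 2wz cos φ + w² = (z - w e^{iφ})(z - w e^{-iφ})`. Since the
angles `(θ + 2πl)/k` differ by the `k`-th roots of unity, the product over `l` collapses, through
`∏ (z - ζˡ α) = zᵏ - αᵏ`, to `z²ᵏ - 2wᵏzᵏ cos θ + w²ᵏ`. With `z = R = s + r` and `w = -ib`, the
relation `R² - b² = 2sR` makes each factor equal to `2R (s + ib cos φ)`, which is (i).
The right-hand side is affine in `cos θ`, so subtracting two instances of (i) gives (ii).
-/

open Complex Finset
open scoped Real

lemma IsPrimitiveRoot.prod_range_sub_pow_mul {R : Type*} [CommRing R] [IsDomain R] {k : ℕ}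
    {ζ : R} (hζ : IsPrimitiveRoot ζ k) (hk : 0 < k) (z α : R) :
    ∏ l ∈ range k, (z - ζ ^ l * α) = z ^ k - α ^ k := by
  simpa [Polynomial.eval_prod] using
    (congrArg (Polynomial.eval z) (X_pow_sub_C_eq_prod hζ hk rfl)).symm

lemma abs_mul_mul_add_mul_mul_le_one {a b c d u v : ℝ} (hab : a ^ 2 + b ^ 2 = 1)
    (hcd : c ^ 2 + d ^ 2 = 1) (hu : |u| ≤ 1) (hv : |v| ≤ 1) :
    |a * c * u + b * d * v| ≤ 1 := by
  calc |a * c * u + b * d * v| ≤ |a * c| * |u| + |b * d| * |v| := by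
        simpa only [abs_mul] using abs_add_le (a * c * u) (b * d * v)
    _ ≤ |a| * |c| + |b| * |d| := by
        rw [abs_mul, abs_mul]
        exact add_le_add (mul_le_of_le_one_right (by positivity) hu)
          (mul_le_of_le_one_right (by positivity) hv)
    _ ≤ 1 := by
        nlinarith [two_mul_le_add_sq |a| |c|, two_mul_le_add_sq |b| |d|, sq_abs a, sq_abs b,
          sq_abs c, sq_abs d]

namespace Complex

lemma re_sq_add_im_sq_of_norm_eq_one {z : ℂ} (hz : ‖z‖ = 1) : z.re ^ 2 + z.im ^ 2 = 1 := by
  rw [sq, sq, ← normSq_apply, ← Complex.sq_norm, hz, one_pow]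

lemma sq_sub_two_mul_mul_cos_add_sq (z w φ : ℂ) :
    z ^ 2 - 2 * w * z * cos φ + w ^ 2 = (z - w * exp (φ * I)) * (z - w * exp (-φ * I)) := by
  have hexp : exp (φ * I) * exp (-φ * I) = 1 := by rw [← exp_add, neg_mul, add_neg_cancel, exp_zero]
  linear_combination -(w * z) * two_cos φ - w ^ 2 * hexp

lemma exp_add_two_pi_mul_div_mul_I (θ : ℂ) {k : ℕ} (hk : k ≠ 0) (l : ℕ) :
    exp ((θ + 2 * π * l) / k * I) = exp (2 * π * I / k) ^ l * exp (θ / k * I) := by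
  rw [← exp_nat_mul, ← exp_add]
  congr 1
  field_simp
  ring

lemma prod_range_sq_sub_two_mul_mul_cos_add_sq {k : ℕ} (hk : 0 < k) (z w θ : ℂ) :
    ∏ l ∈ range k, (z ^ 2 - 2 * w * z * cos ((θ + 2 * π * l) / k) + w ^ 2)
      = z ^ (2 * k) - 2 * w ^ k * z ^ k * cos θ + w ^ (2 * k) := by
  set ζ := exp (2 * π * I / k)
  have hζ : IsPrimitiveRoot ζ k := isPrimitiveRoot_exp k hk.ne'
  have hfactor : ∀ l : ℕ, z ^ 2 - 2 * w * z * cos ((θ + 2 * π * l) / k) + w ^ 2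
      = (z - ζ ^ l * (w * exp (θ / k * I))) * (z - ζ⁻¹ ^ l * (w * exp (-θ / k * I))) := by
    intro l
    rw [sq_sub_two_mul_mul_cos_add_sq]
    simp only [neg_mul, neg_div, exp_neg]
    rw [exp_add_two_pi_mul_div_mul_I θ hk.ne', mul_inv, inv_pow]
    ring
  have hpow : ∀ x : ℂ, (w * exp (x / k * I)) ^ k = w ^ k * exp (x * I) := by
    intro x
    have hk' : (k : ℂ) ≠ 0 := Nat.cast_ne_zero.mpr hk.ne'
    rw [mul_pow, ← exp_nat_mul]
    congr 2
    field_simp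
  simp_rw [hfactor]
  rw [prod_mul_distrib, hζ.prod_range_sub_pow_mul hk, hζ.inv.prod_range_sub_pow_mul hk,
    hpow, hpow]
  have hexp : exp (θ * I) * exp (-θ * I) = 1 := by rw [← exp_add, neg_mul, add_neg_cancel, exp_zero]
  linear_combination (w ^ k * z ^ k) * two_cos θ + w ^ (2 * k) * hexp

lemma two_mul_pow_mul_prod_range_sub_mul_cos {k : ℕ} (hk : 0 < k) {s R w : ℂ}
    (hR : R ^ 2 + w ^ 2 = 2 * s * R) (θ : ℂ) :
    (2 * R) ^ k * ∏ l ∈ range k, (s - w * cos ((θ + 2 * π * l) / k))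
      = R ^ (2 * k) - 2 * w ^ k * R ^ k * cos θ + w ^ (2 * k) := by
  rw [← prod_range_sq_sub_two_mul_mul_cos_add_sq hk]
  nth_rw 1 [← card_range k]
  rw [pow_card_mul_prod]
  refine prod_congr rfl fun l _ ↦ ?_
  linear_combination -hR

lemma prod_range_sub_mul_cos_sub_prod_range_sub_mul_cos {k : ℕ} (hk : 0 < k) (s : ℂ) {w : ℂ}
    (hw : w ≠ 0) (θ φ : ℂ) :
    ∏ l ∈ range k, (s - w * cos ((θ + 2 * π * l) / k))
        - ∏ l ∈ range k, (s - w * cos ((φ + 2 * π * l) / k))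
      = (2 : ℂ) ^ ((1 : ℤ) - k) * w ^ k * (cos φ - cos θ) := by
  obtain ⟨r, hr⟩ := IsAlgClosed.exists_pow_nat_eq (s ^ 2 - w ^ 2) two_pos
  have hR : (s + r) ^ 2 + w ^ 2 = 2 * s * (s + r) := by linear_combination hr
  have hR0 : s + r ≠ 0 := by
    intro h
    rw [h, zero_pow two_ne_zero, zero_add, mul_zero] at hR
    exact hw (pow_eq_zero_iff two_ne_zero |>.mp hR)
  have hpow2 : (2 : ℂ) ^ ((1 : ℤ) - k) * 2 ^ k = 2 := by
    rw [← zpow_natCast, ← zpow_add₀ two_ne_zero, sub_add_cancel, zpow_one]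
  apply mul_left_cancel₀ (pow_ne_zero k (mul_ne_zero two_ne_zero hR0))
  have hθ := two_mul_pow_mul_prod_range_sub_mul_cos hk hR θ
  have hφ := two_mul_pow_mul_prod_range_sub_mul_cos hk hR φ
  rw [mul_pow] at hθ hφ ⊢
  linear_combination hθ - hφ - ((s + r) ^ k * w ^ k * (cos φ - cos θ)) * hpow2

end Complex

/-- **Factorization identities for the dihedral Laplace-domain kernel** (Lemma 4.3).
For `k ≥ 1`, `b > 0`, unimodular `ω, η ∈ ℂ`, and
`X(u,v) = Im(ω^k)Im(η^k)u + Re(ω^k)Re(η^k)v`, `q(u,v) = arccos X(u,v)`,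
`A(s,q) = ∏_{l<k} (s + i b cos((q+2πl)/k))`, one has `|X(u,v)| ≤ 1`,
`X(1,1) = Re(ω^k conj(η)^k)`, and:
(i) `R^k − 2(−ib)^k X(u,v) + (−ib)^{2k}/R^k = 2^k A(s, q(u,v))` whenever
`r² = s² + b²` and `R = s + r ≠ 0`;
(ii) `A(s, q(1,1)) = A(s, q(u,v)) + 2^{1−k}(−ib)^k (Im(ω^k)Im(η^k)(u−1) + Re(ω^k)Re(η^k)(v−1))`. -/
theorem dihedral_factorization
    (k : ℕ) (hk : 1 ≤ k) (b : ℝ) (hb : 0 < b)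
    (ω η : ℂ) (hω : ‖ω‖ = 1) (hη : ‖η‖ = 1)
    (X : ℝ → ℝ → ℝ)
    (hX : ∀ u v, X u v = (ω ^ k).im * (η ^ k).im * u + (ω ^ k).re * (η ^ k).re * v)
    (q : ℝ → ℝ → ℝ) (hq : ∀ u v, q u v = Real.arccos (X u v))
    (A : ℂ → ℝ → ℂ)
    (hA : ∀ s c, A s c = ∏ l ∈ Finset.range k,
      (s + Complex.I * (b : ℂ) * ((Real.cos ((c + 2 * Real.pi * l) / k) : ℝ) : ℂ))) :
    (∀ u ∈ Set.Icc (-1 : ℝ) 1, ∀ v ∈ Set.Icc (-1 : ℝ) 1, |X u v| ≤ 1) ∧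
    X 1 1 = (ω ^ k * (starRingEnd ℂ η) ^ k).re ∧
    (∀ u ∈ Set.Icc (-1 : ℝ) 1, ∀ v ∈ Set.Icc (-1 : ℝ) 1,
      ∀ s r : ℂ, r ^ 2 = s ^ 2 + (b : ℂ) ^ 2 → s + r ≠ 0 →
        (s + r) ^ k - 2 * (-Complex.I * (b : ℂ)) ^ k * ((X u v : ℝ) : ℂ) +
            (-Complex.I * (b : ℂ)) ^ (2 * k) / (s + r) ^ k
          = 2 ^ k * A s (q u v)) ∧
    (∀ u ∈ Set.Icc (-1 : ℝ) 1, ∀ v ∈ Set.Icc (-1 : ℝ) 1, ∀ s : ℂ,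
      A s (q 1 1) = A s (q u v) + (2 : ℂ) ^ ((1 : ℤ) - (k : ℤ)) *
        (-Complex.I * (b : ℂ)) ^ k *
        ((((ω ^ k).im * (η ^ k).im * (u - 1) + (ω ^ k).re * (η ^ k).re * (v - 1) : ℝ)) : ℂ)) := by
  have hXle : ∀ u ∈ Set.Icc (-1 : ℝ) 1, ∀ v ∈ Set.Icc (-1 : ℝ) 1, |X u v| ≤ 1 := by
    intro u hu v hv
    have hωk := re_sq_add_im_sq_of_norm_eq_one (by rw [norm_pow, hω, one_pow] : ‖ω ^ k‖ = 1)
    have hηk := re_sq_add_im_sq_of_norm_eq_one (by rw [norm_pow, hη, one_pow] : ‖η ^ k‖ = 1)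
    rw [hX]
    exact abs_mul_mul_add_mul_mul_le_one (by linarith) (by linarith) (abs_le.mpr hu)
      (abs_le.mpr hv)
  have hcos : ∀ u ∈ Set.Icc (-1 : ℝ) 1, ∀ v ∈ Set.Icc (-1 : ℝ) 1, cos (q u v) = X u v := by
    intro u hu v hv
    obtain ⟨hX₁, hX₂⟩ := abs_le.mp (hXle u hu v hv)
    rw [← ofReal_cos, hq, Real.cos_arccos hX₁ hX₂]
  have hA' : ∀ s c, A s c = ∏ l ∈ Finset.range k, (s - -I * b * cos ((c + 2 * π * l) / k)) := by
    intro s c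
    rw [hA]
    refine Finset.prod_congr rfl fun l _ ↦ ?_
    push_cast
    ring
  have hmem : (1 : ℝ) ∈ Set.Icc (-1 : ℝ) 1 := ⟨by norm_num, le_rfl⟩
  refine ⟨hXle, ?_, ?_, ?_⟩
  · rw [hX, mul_re, ← map_pow, conj_re, conj_im]
    ring
  · intro u hu v hv s r hr hR
    have hRk : (s + r) ^ k ≠ 0 := pow_ne_zero k hR
    have hRw : (s + r) ^ 2 + (-I * b) ^ 2 = 2 * s * (s + r) := by
      linear_combination hr + (b : ℂ) ^ 2 * I_sq
    have key := two_mul_pow_mul_prod_range_sub_mul_cos hk hRw (q u v)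
    rw [hcos u hu v hv, ← hA', mul_pow] at key
    rw [← mul_left_inj' hRk, add_mul, div_mul_cancel₀ _ hRk]
    linear_combination -key
  · intro u hu v hv s
    have hw : -I * (b : ℂ) ≠ 0 :=
      mul_ne_zero (neg_ne_zero.mpr I_ne_zero) (ofReal_ne_zero.mpr hb.ne')
    have key := prod_range_sub_mul_cos_sub_prod_range_sub_mul_cos hk s hw (q 1 1) (q u v)
    rw [← hA', ← hA', hcos u hu v hv, hcos 1 hmem 1 hmem, hX, hX] at key
    push_cast at key ⊢
    linear_combination key
end
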